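/- Let k be a field of characteristic zero and let k⟨y_1,…,y_n⟩ be the free associative k-algebra on n generators. Then for all scalars w_1,…,w_n ∈ k and every multi-index K = (K_1,…,K_n) ∈ ℕ^n, the identity (K_1 w_1 + ⋯ + K_n w_n) · y^K = Σ_{0 < s ≤ K} (∏_{i=1}^n C(K_i, s_i)) · w_{max{i : s_i ≠ 0}} · [y^s]] · y^{K−s} holds, where the sum is over multi-indices s ∈ ℕ^n with s ≠ 0 and s_i ≤ K_i for all i, and C(·,·) denotes binomial coefficients. -/

import Mathlib

/-!
Statement 13: an identity in the free associative algebra.  `cbrk` is the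
complete bracket `[a₁, …, a_m]] = [a₁, [a₂, ⋯ [a_{m-1}, a_m] ⋯]]`, `yPow K` is
the ordered monomial `y₁^{K₁} ⋯ y_n^{K_n}`, `yWord s` the word consisting of
`s₁` copies of `y₁`, …, `s_n` copies of `y_n`, and `wmax w s` is `w_{max{i : s_i ≠ 0}}`.
-/

noncomputable section

variable (k : Type*) [Field k]

/-- The complete bracket `[a₁, …, a_m]]`. -/
def cbrk {B : Type*} [Ring B] : List B → B
  | [] => 0
  | [a] => a
  | a :: b :: rest => a * cbrk (b :: rest) - cbrk (b :: rest) * a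

/-- The ordered monomial `y^K = y₁^{K₁} ⋯ y_n^{K_n}`. -/
def yPow (n : ℕ) (K : Fin n → ℕ) : FreeAlgebra k (Fin n) :=
  (List.ofFn fun i => FreeAlgebra.ι k i ^ K i).prod

/-- The word consisting of `s₁` copies of `y₁`, …, `s_n` copies of `y_n`. -/
def yWord (n : ℕ) (s : Fin n → ℕ) : List (FreeAlgebra k (Fin n)) :=
  (List.ofFn fun i => List.replicate (s i) (FreeAlgebra.ι k i)).flatten

/-- `w_{max{i : s_i ≠ 0}}` (defined as `0` for `s = 0`). -/
def wmax {n : ℕ} (w : Fin n → k) (s : Fin n → ℕ) : k :=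
  if h : (Finset.univ.filter fun i => s i ≠ 0).Nonempty then
    w ((Finset.univ.filter fun i => s i ≠ 0).max' h)
  else 0

/-!
Replace the generators by arbitrary elements `a₁, …, a_n` of a `k`-algebra and induct on `n`,
splitting off the last variable. The binomial theorem for the commuting operators `ad a` and right
multiplication by `a` gives `a^m b = Σ_t C(m,t) (ad a)^t(b) a^(m-t)`, and variable by variable
`a^K b = Σ_{s ≤ K} C(K,s) [a^s, b]] a^(K-s)`. In the sum of the theorem, the terms with `s_n ≥ 2`
vanish because their bracket ends in `[a_n, a_n] = 0`, the terms with `s_n = 0` are the induction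
hypothesis times `a_n^(K_n)`, and the terms with `s_n = 1` add up, by the expansion with `b = a_n`,
to `K_n w_n a^K`.
-/

open Finset

section AdWord

variable {A : Type*} [Ring A]

def adWord (l : List A) (b : A) : A := l.foldr (fun x y => x * y - y * x) b

@[simp] lemma adWord_nil (b : A) : adWord [] b = b := rfl

@[simp] lemma adWord_cons (x : A) (l : List A) (b : A) :
    adWord (x :: l) b = x * adWord l b - adWord l b * x := rfl

lemma adWord_append (l₁ l₂ : List A) (b : A) :
    adWord (l₁ ++ l₂) b = adWord l₁ (adWord l₂ b) := List.foldr_append ..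

@[simp] lemma adWord_zero (l : List A) : adWord l (0 : A) = 0 := by
  induction l with
  | nil => rfl
  | cons x l ih => simp [ih]

lemma adWord_replicate (t : ℕ) (a b : A) :
    adWord (List.replicate t a) b = ((LinearMap.mulLeft ℤ a - LinearMap.mulRight ℤ a) ^ t) b := by
  induction t with
  | zero => rfl
  | succ t ih => rw [List.replicate_succ, adWord_cons, ih, pow_succ', Module.End.mul_apply]; rfl

lemma pow_mul_eq_sum_adWord (a b : A) (m : ℕ) :
    a ^ m * b = ∑ t ∈ Iic m, m.choose t • (adWord (List.replicate t a) b * a ^ (m - t)) := by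
  set R := LinearMap.mulRight ℤ a
  set D := LinearMap.mulLeft ℤ a - R
  have hcomm : Commute D R := (LinearMap.commute_mulLeft_right a a).sub_left (Commute.refl _)
  calc a ^ m * b = ((D + R) ^ m) b := by rw [sub_add_cancel, LinearMap.pow_mulLeft]; rfl
    _ = _ := by
      rw [hcomm.add_pow, LinearMap.sum_apply, Nat.range_succ_eq_Iic]
      refine sum_congr rfl fun t _ => ?_
      rw [(hcomm.pow_pow t (m - t)).eq, LinearMap.pow_mulRight, adWord_replicate,
        Module.End.mul_apply, Module.End.mul_apply, Module.End.natCast_apply, map_nsmul,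
        LinearMap.mulRight_apply, smul_mul_assoc]

lemma adWord_append_replicate_self (l : List A) (a : A) {t : ℕ} (ht : t ≠ 0) :
    adWord (l ++ List.replicate t a) a = 0 := by
  obtain ⟨t, rfl⟩ := Nat.exists_eq_succ_of_ne_zero ht
  simp [List.replicate_succ', adWord_append]

lemma cbrk_append_singleton (l : List A) (b : A) : cbrk (l ++ [b]) = adWord l b := by
  induction l with
  | nil => rfl
  | cons x l ih =>
    rw [List.cons_append]
    cases hl : l ++ [b] with
    | nil => simp at hl
    | cons y r => rw [cbrk, ← hl, ih, adWord_cons]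

lemma cbrk_append_replicate (l : List A) (a : A) {t : ℕ} (ht : 2 ≤ t) :
    cbrk (l ++ List.replicate t a) = 0 := by
  obtain ⟨t, rfl⟩ := Nat.exists_eq_add_of_le' ht
  rw [List.replicate_succ', ← List.append_assoc, cbrk_append_singleton,
    adWord_append_replicate_self _ _ (Nat.succ_ne_zero _)]

end AdWord

lemma Fin.snoc_sub_snoc {α : Type*} [Sub α] {n : ℕ} (u v : Fin n → α) (x y : α) :
    (Fin.snoc u x : Fin (n + 1) → α) - Fin.snoc v y = Fin.snoc (u - v) (x - y) := by
  ext i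
  refine Fin.lastCases ?_ (fun j => ?_) i <;> simp

lemma Fin.prod_snoc_choose {n : ℕ} (K s : Fin n → ℕ) (Kn t : ℕ) :
    ∏ i, ((Fin.snoc K Kn : Fin (n + 1) → ℕ) i).choose ((Fin.snoc s t : Fin (n + 1) → ℕ) i) =
      (∏ i, (K i).choose (s i)) * Kn.choose t := by
  simp [Fin.prod_univ_castSucc]

lemma Finset.Iic_fin_zero (K : Fin 0 → ℕ) : Iic K = {K} := by
  ext s
  simp [Subsingleton.elim s K]

lemma Finset.sum_Iic_snoc {M : Type*} [AddCommMonoid M] {n : ℕ} (K : Fin n → ℕ) (Kn : ℕ)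
    (f : (Fin (n + 1) → ℕ) → M) :
    ∑ s ∈ Iic (Fin.snoc K Kn : Fin (n + 1) → ℕ), f s =
      ∑ t ∈ Iic Kn, ∑ u ∈ Iic K, f (Fin.snoc u t) := by
  rw [← sum_product']
  refine (sum_equiv (Fin.snocEquiv fun _ => ℕ) (fun p => ?_) fun _ _ => rfl).symm
  simp [Pi.le_def, Fin.forall_iff_castSucc]

section OrderedMonomial

variable {A : Type*} {n : ℕ}

def orderedWord (a : Fin n → A) (s : Fin n → ℕ) : List A :=
  (List.ofFn fun i => List.replicate (s i) (a i)).flatten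

lemma orderedWord_snoc (a : Fin n → A) (an : A) (s : Fin n → ℕ) (t : ℕ) :
    orderedWord (Fin.snoc a an : Fin (n + 1) → A) (Fin.snoc s t) =
      orderedWord a s ++ List.replicate t an := by
  rw [orderedWord, List.ofFn_succ']
  simp [orderedWord]

variable [Ring A]

def orderedPow (a : Fin n → A) (K : Fin n → ℕ) : A :=
  (List.ofFn fun i => a i ^ K i).prod

lemma orderedPow_snoc (a : Fin n → A) (an : A) (K : Fin n → ℕ) (Kn : ℕ) :
    orderedPow (Fin.snoc a an : Fin (n + 1) → A) (Fin.snoc K Kn) = orderedPow a K * an ^ Kn := by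
  rw [orderedPow, List.ofFn_succ']
  simp [orderedPow]

theorem orderedPow_mul_eq_sum_adWord (a : Fin n → A) (K : Fin n → ℕ) (b : A) :
    orderedPow a K * b = ∑ s ∈ Iic K,
      (∏ i, (K i).choose (s i)) • (adWord (orderedWord a s) b * orderedPow a (K - s)) := by
  induction n generalizing b with
  | zero => simp [orderedPow, orderedWord, Iic_fin_zero]
  | succ n ih =>
    induction a using Fin.snocCases with | snoc a an => ?_
    induction K using Fin.snocCases with | snoc K Kn => ?_
    rw [orderedPow_snoc, mul_assoc, pow_mul_eq_sum_adWord, mul_sum, sum_Iic_snoc]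
    refine sum_congr rfl fun t _ => ?_
    rw [mul_smul_comm, ← mul_assoc, ih, sum_mul, smul_sum]
    refine sum_congr rfl fun u _ => ?_
    rw [orderedWord_snoc, adWord_append, Fin.snoc_sub_snoc, orderedPow_snoc, Fin.prod_snoc_choose,
      mul_smul, smul_mul_assoc, mul_assoc, smul_comm]

end OrderedMonomial

section Wmax

variable {k} {n : ℕ}

lemma wmax_zero (w : Fin n → k) : wmax k w 0 = 0 := by
  simp [wmax]

lemma wmax_snoc_zero (w : Fin n → k) (wn : k) (s : Fin n → ℕ) :
    wmax k (Fin.snoc w wn : Fin (n + 1) → k) (Fin.snoc s 0) = wmax k w s := by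
  have hsupp : (univ.filter fun i => (Fin.snoc s 0 : Fin (n + 1) → ℕ) i ≠ 0) =
      (univ.filter fun i => s i ≠ 0).image Fin.castSucc := by
    ext i
    refine Fin.lastCases ?_ (fun j => ?_) i <;> simp
  unfold wmax
  rw [hsupp]
  by_cases h : (univ.filter fun i => s i ≠ 0).Nonempty
  · simp [h, max'_image Fin.strictMono_castSucc.monotone]
  · simp [h]

lemma wmax_snoc_of_ne_zero (w : Fin n → k) (wn : k) (s : Fin n → ℕ) {t : ℕ} (ht : t ≠ 0) :
    wmax k (Fin.snoc w wn : Fin (n + 1) → k) (Fin.snoc s t) = wn := by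
  have hlast : Fin.last n ∈ univ.filter fun i => (Fin.snoc s t : Fin (n + 1) → ℕ) i ≠ 0 := by
    simp [ht]
  rw [wmax, dif_pos ⟨_, hlast⟩, le_antisymm (Fin.le_last _) (le_max' _ _ hlast), Fin.snoc_last]

end Wmax

section BracketTerm

variable {k} {A : Type*} [Ring A] [Algebra k A] {n : ℕ}

def bracketTerm (a : Fin n → A) (w : Fin n → k) (K s : Fin n → ℕ) : A :=
  ((∏ i, ((K i).choose (s i) : k)) * wmax k w s) • (cbrk (orderedWord a s) * orderedPow a (K - s))

lemma bracketTerm_zero (a : Fin n → A) (w : Fin n → k) (K : Fin n → ℕ) :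
    bracketTerm a w K 0 = 0 := by
  rw [bracketTerm, wmax_zero, mul_zero, zero_smul]

section Snoc

variable (a : Fin n → A) (an : A) (w : Fin n → k) (wn : k) (K u : Fin n → ℕ) (Kn : ℕ)

lemma bracketTerm_snoc_zero :
    bracketTerm (Fin.snoc a an : Fin (n + 1) → A) (Fin.snoc w wn) (Fin.snoc K Kn) (Fin.snoc u 0) =
      bracketTerm a w K u * an ^ Kn := by
  rw [bracketTerm, bracketTerm, ← Nat.cast_prod, Fin.prod_snoc_choose, wmax_snoc_zero,
    orderedWord_snoc, Fin.snoc_sub_snoc, orderedPow_snoc]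
  simp [mul_assoc]

lemma bracketTerm_snoc_one :
    bracketTerm (Fin.snoc a an : Fin (n + 1) → A) (Fin.snoc w wn) (Fin.snoc K Kn) (Fin.snoc u 1) =
      ((Kn : k) * wn) • ((∏ i, (K i).choose (u i)) •
        (adWord (orderedWord a u) an * orderedPow a (K - u)) * an ^ (Kn - 1)) := by
  rw [bracketTerm, ← Nat.cast_prod, Fin.prod_snoc_choose, wmax_snoc_of_ne_zero _ _ _ one_ne_zero,
    orderedWord_snoc, List.replicate_one, cbrk_append_singleton, Fin.snoc_sub_snoc, orderedPow_snoc,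
    Nat.choose_one_right, Nat.cast_mul, smul_mul_assoc, ← Nat.cast_smul_eq_nsmul k, smul_smul,
    mul_assoc, mul_comm, mul_assoc (adWord _ _)]

lemma bracketTerm_snoc_of_two_le {t : ℕ} (ht : 2 ≤ t) :
    bracketTerm (Fin.snoc a an : Fin (n + 1) → A) (Fin.snoc w wn) (Fin.snoc K Kn) (Fin.snoc u t) =
      0 := by
  rw [bracketTerm, orderedWord_snoc, cbrk_append_replicate _ _ ht, zero_mul, smul_zero]

end Snoc

theorem sum_smul_orderedPow_eq_sum_bracketTerm (a : Fin n → A) (w : Fin n → k) (K : Fin n → ℕ) :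
    (∑ i, (K i : k) * w i) • orderedPow a K = ∑ s ∈ Iic K, bracketTerm a w K s := by
  induction n with
  | zero => simp [Iic_fin_zero, bracketTerm, wmax]
  | succ n ih =>
    induction a using Fin.snocCases with | snoc a an => ?_
    induction w using Fin.snocCases with | snoc w wn => ?_
    induction K using Fin.snocCases with | snoc K Kn => ?_
    have hvanish : ∀ t ∈ Iic Kn, t ≠ 0 ∧ t ≠ 1 → ∑ u ∈ Iic K, bracketTerm
        (Fin.snoc a an : Fin (n + 1) → A) (Fin.snoc w wn) (Fin.snoc K Kn) (Fin.snoc u t) = 0 :=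
      fun t _ ht => sum_eq_zero fun u _ => bracketTerm_snoc_of_two_le a an w wn K u Kn (by omega)
    rw [sum_Iic_snoc, sum_eq_add 0 1 zero_ne_one hvanish (by simp) ?one]
    case one =>
      intro h1
      obtain rfl : Kn = 0 := by simpa using h1
      simp [bracketTerm_snoc_one]
    simp only [bracketTerm_snoc_zero, bracketTerm_snoc_one]
    rw [← sum_mul, ← ih, ← smul_sum, ← sum_mul, ← orderedPow_mul_eq_sum_adWord, orderedPow_snoc,
      Fin.sum_univ_castSucc]
    cases Kn <;> simp [add_smul, pow_succ', mul_assoc]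

end BracketTerm

theorem statement13 (n : ℕ) (w : Fin n → k) (K : Fin n → ℕ) :
    (∑ i, (K i : k) * w i) • yPow k n K =
      ∑ s ∈ (Finset.Iic K).erase 0,
        ((∏ i, ((K i).choose (s i) : k)) * wmax k w s) •
          (cbrk (yWord k n s) * yPow k n (K - s)) := by
  have h := sum_smul_orderedPow_eq_sum_bracketTerm (FreeAlgebra.ι k) w K
  rw [← sum_erase _ (bracketTerm_zero (FreeAlgebra.ι k) w K)] at h
  exact h
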